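/- arXiv:1105.2420 — 2 statements merged into one kernel-verified Lean document; each statement's English description precedes it below -/
import Mathlib

section
/- In the exterior algebra over ℝ of the vector space ℝⁿ × ℝⁿ, let ξᵢ = ι(eᵢ, 0) and ξ′ᵢ = ι(0, eᵢ) for i = 1,…,n, where e₁,…,eₙ is the standard basis of ℝⁿ. For L ⊆ {1,…,n} write ξ^L (resp. ξ′^L) for the product of the ξᵢ (resp. ξ′ᵢ), i ∈ L, in increasing order of indices. Then for every natural number p with 0 ≤ p ≤ n: (Σᵢ₌₁ⁿ ξᵢ ξ′ᵢ)^p = p! · (−1)^{p(p−1)/2} · Σ_{L ⊆ {1,…,n}, |L| = p} ξ^L ξ′^L. -/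
/-! The elements `ηᵢ = ξᵢ ξ′ᵢ` have even degree, so they commute pairwise and square to zero.
Hence the binomial expansion of `(∑ ηᵢ) ^ p` collapses to `p!` times the sum of the products
`η^L` over the `p`-element subsets `L`. Rearranging `η^L = ξ_{i₁} ξ′_{i₁} ⋯ ξ_{i_p} ξ′_{i_p}`
into `ξ^L ξ′^L` moves each `ξ′_{i_k}` past the `p - k` later factors `ξ`, which costs the sign
`(-1) ^ (p choose 2)`. -/

variable {n : ℕ}

/-- `ξᵢ = ι(eᵢ, 0)` in the exterior algebra of `ℝⁿ × ℝⁿ`. -/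
noncomputable def ξ (i : Fin n) : ExteriorAlgebra ℝ ((Fin n → ℝ) × (Fin n → ℝ)) :=
  ExteriorAlgebra.ι ℝ (Pi.single i (1 : ℝ), 0)

/-- `ξ′ᵢ = ι(0, eᵢ)` in the exterior algebra of `ℝⁿ × ℝⁿ`. -/
noncomputable def ξ' (i : Fin n) : ExteriorAlgebra ℝ ((Fin n → ℝ) × (Fin n → ℝ)) :=
  ExteriorAlgebra.ι ℝ ((0 : Fin n → ℝ), Pi.single i (1 : ℝ))

/-- `ξ^L`: product of the `ξᵢ`, `i ∈ L`, in increasing order of indices. -/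
noncomputable def ξpow (L : Finset (Fin n)) : ExteriorAlgebra ℝ ((Fin n → ℝ) × (Fin n → ℝ)) :=
  ((L.sort (· ≤ ·)).map ξ).prod

/-- `ξ′^L`: product of the `ξ′ᵢ`, `i ∈ L`, in increasing order of indices. -/
noncomputable def ξ'pow (L : Finset (Fin n)) : ExteriorAlgebra ℝ ((Fin n → ℝ) × (Fin n → ℝ)) :=
  ((L.sort (· ≤ ·)).map ξ').prod

theorem Commute.add_pow_succ_of_mul_self_eq_zero {A : Type*} [Semiring A] {x y : A}
    (hxy : Commute x y) (hx : x * x = 0) (k : ℕ) :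
    (x + y) ^ (k + 1) = y ^ (k + 1) + (k + 1) • (x * y ^ k) := by
  induction k with
  | zero => simp [add_comm]
  | succ k ih =>
    have hxx : x * (x * y ^ k) = 0 := by rw [← mul_assoc, hx, zero_mul]
    have hyx : y * (x * y ^ k) = x * y ^ (k + 1) := by
      rw [← mul_assoc, ← hxy.eq, mul_assoc, ← pow_succ']
    rw [pow_succ', ih, add_mul, mul_add, mul_add, mul_smul_comm, mul_smul_comm, hxx, hyx,
      ← pow_succ', smul_zero]
    module

namespace Finset

theorem noncommProd_eq_prod_map_sort {α β : Type*} [LinearOrder α] [Monoid β]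
    (s : Finset α) (f : α → β) (comm) :
    s.noncommProd f comm = ((s.sort (· ≤ ·)).map f).prod :=
  (noncommProd_congr (s.sort_toFinset _).symm (fun _ _ => rfl) comm).trans
    (noncommProd_toFinset _ _ _ (s.sort_nodup _))

theorem sum_pow_of_mul_self_eq_zero {ι A : Type*} [DecidableEq ι] [Semiring A]
    (a : ι → A) (hcomm : Pairwise fun i j => Commute (a i) (a j)) (hsq : ∀ i, a i * a i = 0)
    (s : Finset ι) (p : ℕ) :
    (∑ i ∈ s, a i) ^ p =
      p.factorial • ∑ L ∈ s.powersetCard p, L.noncommProd a (hcomm.set_pairwise _) := by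
  induction s using Finset.induction_on generalizing p with
  | empty =>
    cases p with
    | zero => simp
    | succ p => simp [powersetCard_eq_empty.mpr (by simp : (∅ : Finset ι).card < p + 1)]
  | insert j s hj ih =>
    cases p with
    | zero => simp
    | succ p =>
      have hjL : ∀ L ∈ s.powersetCard p, j ∉ L := fun L hL hjL =>
        hj ((mem_powersetCard.mp hL).1 hjL)
      have hdisj : Disjoint (s.powersetCard (p + 1)) ((s.powersetCard p).image (insert j)) := by
        simp only [disjoint_left, mem_image, mem_powersetCard]
        rintro _ ⟨hsub, -⟩ ⟨L, -, rfl⟩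
        exact hj (hsub (mem_insert_self j L))
      have hinj : Set.InjOn (insert j) (s.powersetCard p : Set (Finset ι)) :=
        fun L hL M hM h => by rw [← erase_insert (hjL L hL), h, erase_insert (hjL M hM)]
      have hprod : ∀ L ∈ s.powersetCard p,
          (insert j L).noncommProd a (hcomm.set_pairwise _) =
            a j * L.noncommProd a (hcomm.set_pairwise _) := fun L hL =>
        noncommProd_insert_of_notMem _ _ _ _ (hjL L hL)
      have hjs : Commute (a j) (∑ i ∈ s, a i) :=
        Commute.sum_right s a (a j) fun _ hi => hcomm (ne_of_mem_of_not_mem hi hj).symm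
      rw [sum_insert hj, hjs.add_pow_succ_of_mul_self_eq_zero (hsq j), ih, ih,
        powersetCard_succ_insert hj, sum_union hdisj, sum_image hinj, sum_congr rfl hprod,
        ← mul_sum, mul_smul_comm, smul_smul, smul_add, Nat.factorial_succ]

end Finset

namespace ExteriorAlgebra

variable {R M : Type*} [CommRing R] [AddCommGroup M] [Module R M]

theorem ι_mul_ι_anticomm (x y : M) : ι R x * ι R y = -(ι R y * ι R x) :=
  eq_neg_of_add_eq_zero_left (ι_add_mul_swap x y)

theorem ι_mul_prod_map_ι (x : M) (l : List M) :
    ι R x * (l.map (ι R)).prod = (-1 : ℤ) ^ l.length • ((l.map (ι R)).prod * ι R x) := by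
  induction l with
  | nil => simp
  | cons y l ih =>
    rw [List.map_cons, List.prod_cons, ← mul_assoc, ι_mul_ι_anticomm x y, neg_mul, mul_assoc, ih,
      mul_smul_comm, List.length_cons, pow_succ, mul_neg_one, neg_smul, mul_assoc]

theorem commute_ι_mul_ι (a b c d : M) : Commute (ι R a * ι R b) (ι R c * ι R d) := by
  have h (x : M) : Commute (ι R x) (ι R c * ι R d) := by
    rw [Commute, SemiconjBy]
    simpa using ι_mul_prod_map_ι (R := R) x [c, d]
  exact (h a).mul_left (h b)

theorem ι_mul_ι_mul_self (a b : M) : ι R a * ι R b * (ι R a * ι R b) = 0 := by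
  rw [mul_assoc, ← mul_assoc (ι R b), ι_mul_ι_anticomm b a]
  simp [← mul_assoc]

theorem prod_map_ι_mul_ι {α : Type*} (x y : α → M) (l : List α) :
    (l.map fun i => ι R (x i) * ι R (y i)).prod =
      (-1 : ℤ) ^ l.length.choose 2 •
        ((l.map fun i => ι R (x i)).prod * (l.map fun i => ι R (y i)).prod) := by
  induction l with
  | nil => simp
  | cons i l ih =>
    have hyi := ι_mul_prod_map_ι (R := R) (y i) (l.map x)
    simp only [List.map_map, List.length_map, Function.comp_def] at hyi
    rw [List.map_cons, List.prod_cons, ih, mul_smul_comm, List.map_cons, List.map_cons,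
      List.prod_cons, List.prod_cons, mul_assoc, ← mul_assoc (ι R (y i)), hyi, List.length_cons,
      Nat.choose_succ_succ', Nat.choose_one_right, pow_add, mul_comm, mul_smul]
    simp only [smul_mul_assoc, mul_smul_comm, mul_assoc]

end ExteriorAlgebra

theorem pow_of_sum_xi_xi'_general (p : ℕ) :
    (∑ i : Fin n, ξ i * ξ' i) ^ p =
      ((p.factorial : ℤ) * (-1) ^ (p * (p - 1) / 2)) •
        ∑ L ∈ Finset.powersetCard p (Finset.univ : Finset (Fin n)), ξpow L * ξ'pow L := by
  have hcomm : Pairwise fun i j : Fin n => Commute (ξ i * ξ' i) (ξ j * ξ' j) :=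
    fun _ _ _ => ExteriorAlgebra.commute_ι_mul_ι _ _ _ _
  rw [Finset.sum_pow_of_mul_self_eq_zero _ hcomm (fun _ => ExteriorAlgebra.ι_mul_ι_mul_self _ _),
    mul_smul, natCast_zsmul]
  congr 1
  rw [Finset.smul_sum]
  refine Finset.sum_congr rfl fun L hL => ?_
  rw [Finset.noncommProd_eq_prod_map_sort, ← Nat.choose_two_right, ξpow, ξ'pow,
    ← (Finset.mem_powersetCard_univ.mp hL), ← L.length_sort (· ≤ ·)]
  exact ExteriorAlgebra.prod_map_ι_mul_ι _ _ _

theorem pow_of_sum_xi_xi' (p : ℕ) (hp : p ≤ n) :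
    (∑ i : Fin n, ξ i * ξ' i) ^ p =
      ((p.factorial : ℤ) * (-1) ^ (p * (p - 1) / 2)) •
        ∑ L ∈ Finset.powersetCard p (Finset.univ : Finset (Fin n)), ξpow L * ξ'pow L :=
  pow_of_sum_xi_xi'_general p
end

section
/- For every natural number k there exist functions b^α ∈ ℬ(ℝ^d × ℝ^d), indexed by multi-indices α of order |α| ≤ 2k in the 2d variables, such that for every smooth function f : ℝ^d × ℝ^d → ℂ, (O^k f)(x,w) = (1 + |x|² + |w|²)^{−k} Σ_{|α| ≤ 2k} b^α(x,w) (∂^α f)(x,w). -/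
open MeasureTheory Complex

variable {d : ℕ}

/-- Second derivative of `f` in direction `v`. -/
noncomputable def dir2 (v : (Fin d → ℝ) × (Fin d → ℝ)) (f : (Fin d → ℝ) × (Fin d → ℝ) → ℂ)
    (z : (Fin d → ℝ) × (Fin d → ℝ)) : ℂ :=
  fderiv ℝ (fun y => fderiv ℝ f y v) z v

/-- The Laplacian in all `2d` variables. -/
noncomputable def lap (f : (Fin d → ℝ) × (Fin d → ℝ) → ℂ)
    (z : (Fin d → ℝ) × (Fin d → ℝ)) : ℂ :=
  ∑ i : Fin d, dir2 (Pi.single i 1, 0) f z + ∑ i : Fin d, dir2 (0, Pi.single i 1) f z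

/-- The weight `1 + |x|² + |w|²`. -/
noncomputable def wt (z : (Fin d → ℝ) × (Fin d → ℝ)) : ℝ :=
  1 + ∑ i, z.1 i ^ 2 + ∑ i, z.2 i ^ 2

/-- The operator `(O f)(x,w) = (1 − Δ)(f(x,w)/(1 + |x|² + |w|²))`. -/
noncomputable def Oop (f : (Fin d → ℝ) × (Fin d → ℝ) → ℂ) :
    (Fin d → ℝ) × (Fin d → ℝ) → ℂ :=
  fun z => f z / (wt z : ℂ) - lap (fun y => f y / (wt y : ℂ)) z

/-- First-order partial derivative in the `i`-th `x`-variable. -/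
noncomputable def pdx (i : Fin d) (f : (Fin d → ℝ) × (Fin d → ℝ) → ℂ) :
    (Fin d → ℝ) × (Fin d → ℝ) → ℂ :=
  fun z => fderiv ℝ f z (Pi.single i 1, 0)

/-- First-order partial derivative in the `i`-th `w`-variable. -/
noncomputable def pdw (i : Fin d) (f : (Fin d → ℝ) × (Fin d → ℝ) → ℂ) :
    (Fin d → ℝ) × (Fin d → ℝ) → ℂ :=
  fun z => fderiv ℝ f z (0, Pi.single i 1)

/-- The partial derivative `∂^α` for a multi-index `α = (α₁, α₂)` in the `2d` variables. -/
noncomputable def pdMulti (α : (Fin d → ℕ) × (Fin d → ℕ))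
    (f : (Fin d → ℝ) × (Fin d → ℝ) → ℂ) : (Fin d → ℝ) × (Fin d → ℝ) → ℂ :=
  (List.ofFn fun i : Fin d => (pdx i)^[α.1 i]).foldr (fun F g => F g)
    ((List.ofFn fun i : Fin d => (pdw i)^[α.2 i]).foldr (fun F g => F g) f)

/-- Membership in `ℬ`: smooth with all derivatives (including order zero) bounded. -/
def IsBSpace (g : (Fin d → ℝ) × (Fin d → ℝ) → ℂ) : Prop :=
  ContDiff ℝ (⊤ : ℕ∞) g ∧ ∀ N : ℕ, ∃ C : ℝ, ∀ z, ‖iteratedFDeriv ℝ N g z‖ ≤ C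

/-- The finite set of multi-indices of order `≤ 2k` in the `2d` variables. -/
def MIdx (d k : ℕ) : Finset ((Fin d → ℕ) × (Fin d → ℕ)) :=
  ((Finset.univ : Finset ((Fin d → Fin (2 * k + 1)) × (Fin d → Fin (2 * k + 1)))).image
      fun α => ((fun i => (α.1 i : ℕ)), (fun i => (α.2 i : ℕ)))).filter
    fun α => (∑ i, α.1 i) + (∑ i, α.2 i) ≤ 2 * k

/-! ### Auxiliary development -/

abbrev EE (d : ℕ) := (Fin d → ℝ) × (Fin d → ℝ)
abbrev Idx (d : ℕ) := (Fin d → ℕ) × (Fin d → ℕ)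

noncomputable def pd (v : EE d) (f : EE d → ℂ) (z : EE d) : ℂ := fderiv ℝ f z v

section WtBasics

lemma one_le_wt (z : EE d) : 1 ≤ wt z := by
  have h1 : 0 ≤ ∑ i, z.1 i ^ 2 := Finset.sum_nonneg fun i _ => sq_nonneg _
  have h2 : 0 ≤ ∑ i, z.2 i ^ 2 := Finset.sum_nonneg fun i _ => sq_nonneg _
  unfold wt; linarith

lemma wt_pos (z : EE d) : 0 < wt z := lt_of_lt_of_le one_pos (one_le_wt z)

lemma wtC_ne_zero (z : EE d) : ((wt z : ℝ) : ℂ) ≠ 0 := by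
  simpa using (wt_pos z).ne'

noncomputable def coordx (i : Fin d) : EE d →L[ℝ] ℝ :=
  (ContinuousLinearMap.proj i).comp (ContinuousLinearMap.fst ℝ _ _)

noncomputable def coordw (i : Fin d) : EE d →L[ℝ] ℝ :=
  (ContinuousLinearMap.proj i).comp (ContinuousLinearMap.snd ℝ _ _)

@[simp] lemma coordx_apply (i : Fin d) (v : EE d) : coordx i v = v.1 i := rfl
@[simp] lemma coordw_apply (i : Fin d) (v : EE d) : coordw i v = v.2 i := rfl

noncomputable def gradWt (z : EE d) : EE d →L[ℝ] ℝ :=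
  ∑ i, (2 * z.1 i) • coordx i + ∑ i, (2 * z.2 i) • coordw i

lemma gradWt_apply (z v : EE d) :
    gradWt z v = ∑ i, 2 * z.1 i * v.1 i + ∑ i, 2 * z.2 i * v.2 i := by
  simp [gradWt, smul_eq_mul]

lemma hasFDerivAt_wt (z : EE d) : HasFDerivAt wt (gradWt z) z := by
  have hx : ∀ i : Fin d, HasFDerivAt (fun y : EE d => y.1 i ^ 2) ((2 * z.1 i) • coordx i) z := by
    intro i
    have h := (hasDerivAt_pow 2 (z.1 i)).comp_hasFDerivAt z ((coordx i).hasFDerivAt (x := z))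
    simpa [pow_one, Function.comp_def] using h
  have hw : ∀ i : Fin d, HasFDerivAt (fun y : EE d => y.2 i ^ 2) ((2 * z.2 i) • coordw i) z := by
    intro i
    have h := (hasDerivAt_pow 2 (z.2 i)).comp_hasFDerivAt z ((coordw i).hasFDerivAt (x := z))
    simpa [pow_one, Function.comp_def] using h
  have h1 : HasFDerivAt (fun y : EE d => ∑ i, y.1 i ^ 2)
      (∑ i, (2 * z.1 i) • coordx i) z := by
    simpa using HasFDerivAt.fun_sum (fun i _ => hx i)
  have h2 : HasFDerivAt (fun y : EE d => ∑ i, y.2 i ^ 2)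
      (∑ i, (2 * z.2 i) • coordw i) z := by
    simpa using HasFDerivAt.fun_sum (fun i _ => hw i)
  have hwt : wt (d := d) = fun y => 1 + ∑ i, y.1 i ^ 2 + ∑ i, y.2 i ^ 2 := rfl
  rw [hwt, gradWt]
  simpa [Pi.add_def] using ((hasFDerivAt_const (1 : ℝ) z).add h1).add h2

lemma fderiv_wt (z : EE d) : fderiv ℝ wt z = gradWt z := (hasFDerivAt_wt z).fderiv

lemma contDiff_wt : ContDiff ℝ (⊤ : ℕ∞) (wt (d := d)) := by
  unfold wt
  refine (contDiff_const.add (ContDiff.sum fun i _ => ?_)).add (ContDiff.sum fun i _ => ?_)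
  · exact ((coordx i).contDiff (n := (⊤ : ℕ∞))).pow 2
  · exact ((coordw i).contDiff (n := (⊤ : ℕ∞))).pow 2

lemma contDiff_wtC : ContDiff ℝ (⊤ : ℕ∞) (fun z : EE d => ((wt z : ℝ) : ℂ)) :=
  Complex.ofRealCLM.contDiff.comp contDiff_wt

lemma contDiff_invwtpow (m : ℕ) :
    ContDiff ℝ (⊤ : ℕ∞) (fun z : EE d => (((wt z : ℝ) : ℂ) ^ m)⁻¹) :=
  (contDiff_wtC.pow m).inv fun z => pow_ne_zero _ (wtC_ne_zero z)

end WtBasics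

section PdBasics

lemma pd_contDiff {f : EE d → ℂ} (hf : ContDiff ℝ (⊤ : ℕ∞) f) (v : EE d) :
    ContDiff ℝ (⊤ : ℕ∞) (pd v f) := by
  have h : ContDiff ℝ (⊤ : ℕ∞) (fderiv ℝ f) := hf.fderiv_right (by simp)
  exact h.clm_apply contDiff_const

lemma pd_add {a b : EE d → ℂ} {z : EE d} (ha : DifferentiableAt ℝ a z)
    (hb : DifferentiableAt ℝ b z) (v : EE d) :
    pd v (fun y => a y + b y) z = pd v a z + pd v b z := by
  simp [pd, fderiv_fun_add ha hb]

lemma pd_sub {a b : EE d → ℂ} {z : EE d} (ha : DifferentiableAt ℝ a z)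
    (hb : DifferentiableAt ℝ b z) (v : EE d) :
    pd v (fun y => a y - b y) z = pd v a z - pd v b z := by
  simp [pd, fderiv_fun_sub ha hb]

lemma pd_mul {a b : EE d → ℂ} {z : EE d} (ha : DifferentiableAt ℝ a z)
    (hb : DifferentiableAt ℝ b z) (v : EE d) :
    pd v (fun y => a y * b y) z = pd v a z * b z + a z * pd v b z := by
  simp only [pd, fderiv_fun_mul ha hb]
  simp [smul_eq_mul]
  ring

lemma pd_const (c : ℂ) (v : EE d) (z : EE d) : pd v (fun _ => c) z = 0 := by
  simp [pd]

lemma pd_const_mul {a : EE d → ℂ} {z : EE d} (ha : DifferentiableAt ℝ a z) (c : ℂ) (v : EE d) :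
    pd v (fun y => c * a y) z = c * pd v a z := by
  rw [pd_mul (differentiableAt_const c) ha, pd_const]
  ring

lemma pd_sum {ι : Type*} {s : Finset ι} {g : ι → EE d → ℂ} {z : EE d}
    (h : ∀ i ∈ s, DifferentiableAt ℝ (g i) z) (v : EE d) :
    pd v (fun y => ∑ i ∈ s, g i y) z = ∑ i ∈ s, pd v (g i) z := by
  simp [pd, fderiv_fun_sum h]

lemma pd_comm {f : EE d → ℂ} (hf : ContDiff ℝ (⊤ : ℕ∞) f) (v u : EE d) (z : EE d) :
    pd v (pd u f) z = pd u (pd v f) z := by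
  have hsym : IsSymmSndFDerivAt ℝ f z := (hf.contDiffAt).isSymmSndFDerivAt (by rw [minSmoothness_of_isRCLikeNormedField]; exact WithTop.coe_le_coe.mpr le_top)
  have hdf : ContDiff ℝ (⊤ : ℕ∞) (fderiv ℝ f) := hf.fderiv_right (by simp)
  have hdiff : DifferentiableAt ℝ (fderiv ℝ f) z :=
    (hdf.differentiable (by simp)) z
  have key : ∀ w : EE d, pd w f = fun y => (ContinuousLinearMap.apply ℝ ℂ w) (fderiv ℝ f y) :=
    fun w => rfl
  have h1 : ∀ w w' : EE d,
      pd w' (pd w f) z = fderiv ℝ (fderiv ℝ f) z w' w := by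
    intro w w'
    have hc : HasFDerivAt (pd w f)
        ((ContinuousLinearMap.apply ℝ ℂ w).comp (fderiv ℝ (fderiv ℝ f) z)) z := by
      rw [key w]
      exact (ContinuousLinearMap.apply ℝ ℂ w).hasFDerivAt.comp z hdiff.hasFDerivAt
    rw [pd, hc.fderiv]
    rfl
  rw [h1 v u, h1 u v, hsym u v]

lemma pd_iterate_contDiff {f : EE d → ℂ} (hf : ContDiff ℝ (⊤ : ℕ∞) f) (v : EE d) (n : ℕ) :
    ContDiff ℝ (⊤ : ℕ∞) ((pd v)^[n] f) := by
  induction n with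
  | zero => exact hf
  | succ n ih => rw [Function.iterate_succ_apply']; exact pd_contDiff ih v

lemma pd_comm_iterate {f : EE d → ℂ} (hf : ContDiff ℝ (⊤ : ℕ∞) f) (v u : EE d) (n : ℕ) :
    pd v ((pd u)^[n] f) = (pd u)^[n] (pd v f) := by
  induction n with
  | zero => rfl
  | succ n ih =>
    rw [Function.iterate_succ_apply', Function.iterate_succ_apply', ← ih]
    exact funext fun z => pd_comm (pd_iterate_contDiff hf u n) v u z

noncomputable def applyList (L : List (EE d × ℕ)) (f : EE d → ℂ) : EE d → ℂ :=
  L.foldr (fun p g => (pd p.1)^[p.2] g) f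

@[simp] lemma applyList_nil (f : EE d → ℂ) : applyList [] f = f := rfl

@[simp] lemma applyList_cons (p : EE d × ℕ) (L : List (EE d × ℕ)) (f : EE d → ℂ) :
    applyList (p :: L) f = (pd p.1)^[p.2] (applyList L f) := rfl

lemma applyList_append (L₁ L₂ : List (EE d × ℕ)) (f : EE d → ℂ) :
    applyList (L₁ ++ L₂) f = applyList L₁ (applyList L₂ f) := by
  unfold applyList; rw [List.foldr_append]

lemma applyList_contDiff {f : EE d → ℂ} (hf : ContDiff ℝ (⊤ : ℕ∞) f) (L : List (EE d × ℕ)) :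
    ContDiff ℝ (⊤ : ℕ∞) (applyList L f) := by
  induction L with
  | nil => exact hf
  | cons p L ih => exact pd_iterate_contDiff ih p.1 p.2

lemma pd_applyList {f : EE d → ℂ} (hf : ContDiff ℝ (⊤ : ℕ∞) f) (v : EE d) (L : List (EE d × ℕ)) :
    pd v (applyList L f) = applyList L (pd v f) := by
  induction L with
  | nil => rfl
  | cons p L ih =>
    rw [applyList_cons, applyList_cons, pd_comm_iterate (applyList_contDiff hf L) v p.1, ih]

end PdBasics

section PdMulti

noncomputable def evx (i : Fin d) : EE d := (Pi.single i 1, 0)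
noncomputable def evw (i : Fin d) : EE d := (0, Pi.single i 1)

lemma pdMulti_eq (α : Idx d) (f : EE d → ℂ) :
    pdMulti α f =
      applyList ((List.ofFn fun i => (evx i, α.1 i)) ++ (List.ofFn fun i => (evw i, α.2 i))) f := by
  rw [applyList_append]
  unfold pdMulti applyList
  rw [List.ofFn_eq_map, List.ofFn_eq_map, List.ofFn_eq_map, List.ofFn_eq_map,
    List.foldr_map, List.foldr_map, List.foldr_map, List.foldr_map]
  rfl

lemma pdMulti_contDiff {f : EE d → ℂ} (hf : ContDiff ℝ (⊤ : ℕ∞) f) (α : Idx d) :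
    ContDiff ℝ (⊤ : ℕ∞) (pdMulti α f) := by
  rw [pdMulti_eq]; exact applyList_contDiff hf _

lemma applyList_ofFn_update {g : EE d → ℂ} (hg : ContDiff ℝ (⊤ : ℕ∞) g) (e : Fin d → EE d)
    (β : Fin d → ℕ) (i : Fin d) :
    applyList (List.ofFn fun j => (e j, β j + (Pi.single i 1 : Fin d → ℕ) j)) g
      = applyList (List.ofFn fun j => (e j, β j)) (pd (e i) g) := by
  obtain ⟨s, t, hst⟩ := List.append_of_mem (List.mem_finRange i)
  have hnd : (s ++ i :: t).Nodup := by rw [← hst]; exact List.nodup_finRange d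
  have his : i ∉ s := by
    have := List.disjoint_of_nodup_append hnd
    intro h; exact this h (List.mem_cons_self (a := i) (l := t))
  have hit : i ∉ t := by
    have := (List.nodup_append.mp hnd).2.1
    exact (List.nodup_cons.mp this).1
  have hmap : ∀ (γ : Fin d → ℕ),
      List.ofFn (fun j => (e j, γ j)) = (s ++ i :: t).map fun j => (e j, γ j) := by
    intro γ; rw [List.ofFn_eq_map, hst]
  rw [hmap, hmap, List.map_append, List.map_append, List.map_cons, List.map_cons,
    applyList_append, applyList_append, applyList_cons, applyList_cons]
  have hs_eq : (s.map fun j => (e j, β j + (Pi.single i 1 : Fin d → ℕ) j))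
      = s.map fun j => (e j, β j) := by
    apply List.map_congr_left
    intro j hj
    have : j ≠ i := fun h => his (h ▸ hj)
    simp [Pi.single_apply, this]
  have ht_eq : (t.map fun j => (e j, β j + (Pi.single i 1 : Fin d → ℕ) j))
      = t.map fun j => (e j, β j) := by
    apply List.map_congr_left
    intro j hj
    have : j ≠ i := fun h => hit (h ▸ hj)
    simp [Pi.single_apply, this]
  rw [hs_eq, ht_eq]
  have hbi : β i + (Pi.single i 1 : Fin d → ℕ) i = β i + 1 := by simp
  dsimp only
  rw [hbi, Function.iterate_succ_apply, pd_applyList hg (e i)]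

end PdMulti

section ShiftDefs

noncomputable def ev (s : Fin d ⊕ Fin d) : EE d := Sum.elim evx evw s

def shiftIdx (s : Fin d ⊕ Fin d) : Idx d :=
  Sum.elim (fun i => (Pi.single i 1, 0)) (fun i => (0, Pi.single i 1)) s

lemma pdMulti_shift {f : EE d → ℂ} (hf : ContDiff ℝ (⊤ : ℕ∞) f) (α : Idx d) (s : Fin d ⊕ Fin d) :
    pd (ev s) (pdMulti α f) = pdMulti (α + shiftIdx s) f := by
  rw [pdMulti_eq, pdMulti_eq, pd_applyList hf]
  cases s with
  | inl i =>
    have h1 : α + shiftIdx (Sum.inl i) = (α.1 + Pi.single i 1, α.2) := rfl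
    rw [h1]
    rw [applyList_append, applyList_append]
    have hw : ContDiff ℝ (⊤ : ℕ∞) (applyList (List.ofFn fun i => (evw i, α.2 i)) f) :=
      applyList_contDiff hf _
    have := applyList_ofFn_update hw evx α.1 i
    simp only [Pi.add_apply] at this ⊢
    rw [this, pd_applyList hf]
    rfl
  | inr i =>
    have h1 : α + shiftIdx (Sum.inr i) = (α.1, α.2 + Pi.single i 1) := rfl
    rw [h1]
    rw [applyList_append, applyList_append]
    have := applyList_ofFn_update hf evw α.2 i
    simp only [Pi.add_apply] at this ⊢
    rw [this]
    rfl

lemma lap_eq_sum (h : EE d → ℂ) (z : EE d) :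
    lap h z = ∑ s : Fin d ⊕ Fin d, pd (ev s) (pd (ev s) h) z := by
  rw [Fintype.sum_sum_type]
  rfl

lemma pdMulti_zero (f : EE d → ℂ) : pdMulti (0 : Idx d) f = f := by
  have key : ∀ (g : EE d → ℂ) (e : Fin d → EE d),
      applyList (List.ofFn fun i => (e i, (0 : ℕ))) g = g := by
    intro g e
    have haux : ∀ (L : List (EE d × ℕ)), (∀ p ∈ L, p.2 = 0) → applyList L g = g := by
      intro L
      induction L with
      | nil => intro _; rfl
      | cons p L ih =>
        intro hp
        rw [applyList_cons, hp p (List.mem_cons_self (a := p) (l := L)),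
          ih fun q hq => hp q (List.mem_cons_of_mem p hq)]
        rfl
    apply haux
    intro p hp
    rw [List.mem_ofFn] at hp
    obtain ⟨i, hi⟩ := hp
    rw [← hi]
  rw [pdMulti_eq, applyList_append]
  simp only [Prod.fst_zero, Prod.snd_zero, Pi.zero_apply]
  rw [key f evw, key _ evx]

end ShiftDefs

/-! ### The inverse-power derivative computation -/

noncomputable def rv (v : EE d) (z : EE d) : ℂ :=
  ((fderiv ℝ wt z v : ℝ) : ℂ) * (((wt z : ℝ) : ℂ))⁻¹

lemma hasFDerivAt_wtC (z : EE d) :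
    HasFDerivAt (fun y : EE d => ((wt y : ℝ) : ℂ)) (Complex.ofRealCLM.comp (gradWt z)) z :=
  Complex.ofRealCLM.hasFDerivAt.comp z (hasFDerivAt_wt z)

lemma pd_inv_wtpow (n : ℕ) (v : EE d) (z : EE d) :
    pd v (fun y => (((wt y : ℝ) : ℂ) ^ (n+1))⁻¹) z
      = ((((wt z : ℝ) : ℂ)) ^ (n+1))⁻¹ * (-(n+1 : ℂ)) * rv v z := by
  have hne := wtC_ne_zero z
  have heq : (fun y : EE d => (((wt y : ℝ) : ℂ) ^ (n+1))⁻¹)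
      = fun y => ((wt y : ℝ) : ℂ) ^ (-((n+1 : ℕ) : ℤ)) := by
    funext y; rw [zpow_neg, zpow_natCast]
  have hd := (hasDerivAt_zpow (-((n+1 : ℕ) : ℤ)) ((wt z : ℝ) : ℂ)
    (Or.inl hne)).comp_hasFDerivAt z (hasFDerivAt_wtC z)
  have hd' : HasFDerivAt (fun y : EE d => ((wt y : ℝ) : ℂ) ^ (-((n+1 : ℕ) : ℤ)))
      ((((-((n+1 : ℕ) : ℤ) : ℤ) : ℂ) * ((wt z : ℝ) : ℂ) ^ (-((n+1 : ℕ) : ℤ) - 1)) •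
        (Complex.ofRealCLM.comp (gradWt z))) z := hd
  rw [pd, heq, hd'.fderiv]
  have hexp : (-((n+1 : ℕ) : ℤ) - 1) = -(((n+2 : ℕ) : ℤ)) := by push_cast; ring
  rw [ContinuousLinearMap.smul_apply, ContinuousLinearMap.comp_apply]
  rw [hexp, zpow_neg, zpow_natCast]
  rw [rv, fderiv_wt]
  have : Complex.ofRealCLM (gradWt z v) = ((gradWt z v : ℝ) : ℂ) := rfl
  rw [this]
  set w := ((wt z : ℝ) : ℂ)
  set a := ((gradWt z v : ℝ) : ℂ)
  rw [smul_eq_mul]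
  push_cast
  rw [pow_succ]
  field_simp

lemma contDiff_rv (v : EE d) : ContDiff ℝ (⊤ : ℕ∞) (rv v) := by
  have h1 : ContDiff ℝ (⊤ : ℕ∞) (fun z : EE d => ((fderiv ℝ wt z v : ℝ) : ℂ)) := by
    have he : (fun z : EE d => ((fderiv ℝ wt z v : ℝ) : ℂ))
        = fun z => ((∑ i, 2 * z.1 i * v.1 i + ∑ i, 2 * z.2 i * v.2 i : ℝ) : ℂ) := by
      funext z; rw [fderiv_wt, gradWt_apply]
    rw [he]
    apply Complex.ofRealCLM.contDiff.comp
    refine ContDiff.add (ContDiff.sum fun i _ => ?_) (ContDiff.sum fun i _ => ?_)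
    · exact (contDiff_const.mul ((coordx i).contDiff)).mul contDiff_const
    · exact (contDiff_const.mul ((coordw i).contDiff)).mul contDiff_const
  exact h1.mul ((contDiff_wtC.inv wtC_ne_zero))

lemma pd_invpow_mul (n : ℕ) (v : EE d) {S : EE d → ℂ} {z : EE d}
    (hS : DifferentiableAt ℝ S z) :
    pd v (fun y => (((wt y : ℝ) : ℂ) ^ (n+1))⁻¹ * S y) z
      = ((((wt z : ℝ) : ℂ)) ^ (n+1))⁻¹ * (pd v S z - (n+1 : ℂ) * rv v z * S z) := by
  have hinv : DifferentiableAt ℝ (fun y : EE d => (((wt y : ℝ) : ℂ) ^ (n+1))⁻¹) z :=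
    ((contDiff_invwtpow (n+1)).differentiable (by simp)) z
  rw [pd_mul hinv hS, pd_inv_wtpow]
  ring

/-! ### The algebra of coefficient functions -/

inductive InQ : (EE d → ℂ) → Prop
  | const (c : ℂ) : InQ fun _ => c
  | invwt : InQ fun z => (((wt z : ℝ)) : ℂ)⁻¹
  | xdiv (i : Fin d) : InQ fun z => ((z.1 i : ℝ) : ℂ) * (((wt z : ℝ)) : ℂ)⁻¹
  | wdiv (i : Fin d) : InQ fun z => ((z.2 i : ℝ) : ℂ) * (((wt z : ℝ)) : ℂ)⁻¹
  | add {a b : EE d → ℂ} : InQ a → InQ b → InQ fun z => a z + b z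
  | mul {a b : EE d → ℂ} : InQ a → InQ b → InQ fun z => a z * b z

lemma InQ.contDiff {g : EE d → ℂ} (hg : InQ g) : ContDiff ℝ (⊤ : ℕ∞) g := by
  induction hg with
  | const c => exact contDiff_const
  | invwt => exact contDiff_wtC.inv wtC_ne_zero
  | xdiv i =>
    exact (Complex.ofRealCLM.contDiff.comp ((coordx i).contDiff)).mul
      (contDiff_wtC.inv wtC_ne_zero)
  | wdiv i =>
    exact (Complex.ofRealCLM.contDiff.comp ((coordw i).contDiff)).mul
      (contDiff_wtC.inv wtC_ne_zero)
  | add _ _ iha ihb => exact iha.add ihb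
  | mul _ _ iha ihb => exact iha.mul ihb

lemma abs_le_wt_x (z : EE d) (i : Fin d) : |z.1 i| ≤ wt z := by
  have h1 : z.1 i ^ 2 ≤ ∑ j, z.1 j ^ 2 :=
    Finset.single_le_sum (fun j _ => sq_nonneg (z.1 j)) (Finset.mem_univ i)
  have h2 : 0 ≤ ∑ j, z.2 j ^ 2 := Finset.sum_nonneg fun j _ => sq_nonneg _
  have hwt : 1 + z.1 i ^ 2 ≤ wt z := by unfold wt; linarith
  nlinarith [_root_.sq_abs (z.1 i), abs_nonneg (z.1 i)]

lemma abs_le_wt_w (z : EE d) (i : Fin d) : |z.2 i| ≤ wt z := by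
  have h1 : z.2 i ^ 2 ≤ ∑ j, z.2 j ^ 2 :=
    Finset.single_le_sum (fun j _ => sq_nonneg (z.2 j)) (Finset.mem_univ i)
  have h2 : 0 ≤ ∑ j, z.1 j ^ 2 := Finset.sum_nonneg fun j _ => sq_nonneg _
  have hwt : 1 + z.2 i ^ 2 ≤ wt z := by unfold wt; linarith
  nlinarith [_root_.sq_abs (z.2 i), abs_nonneg (z.2 i)]

lemma InQ.bounded {g : EE d → ℂ} (hg : InQ g) : ∃ C : ℝ, ∀ z, ‖g z‖ ≤ C := by
  induction hg with
  | const c => exact ⟨‖c‖, fun z => le_rfl⟩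
  | invwt =>
    refine ⟨1, fun z => ?_⟩
    rw [norm_inv, Complex.norm_real, Real.norm_eq_abs, abs_of_pos (wt_pos z)]
    rw [inv_le_one_iff₀]
    right; exact one_le_wt z
  | xdiv i =>
    refine ⟨1, fun z => ?_⟩
    rw [norm_mul, norm_inv, Complex.norm_real, Complex.norm_real, Real.norm_eq_abs, Real.norm_eq_abs, abs_of_pos (wt_pos z)]
    rw [← div_eq_mul_inv, div_le_one (wt_pos z)]
    exact abs_le_wt_x z i
  | wdiv i =>
    refine ⟨1, fun z => ?_⟩
    rw [norm_mul, norm_inv, Complex.norm_real, Complex.norm_real, Real.norm_eq_abs, Real.norm_eq_abs, abs_of_pos (wt_pos z)]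
    rw [← div_eq_mul_inv, div_le_one (wt_pos z)]
    exact abs_le_wt_w z i
  | add _ _ iha ihb =>
    obtain ⟨C₁, h₁⟩ := iha; obtain ⟨C₂, h₂⟩ := ihb
    exact ⟨C₁ + C₂, fun z => (norm_add_le _ _).trans (add_le_add (h₁ z) (h₂ z))⟩
  | mul _ _ iha ihb =>
    obtain ⟨C₁, h₁⟩ := iha; obtain ⟨C₂, h₂⟩ := ihb
    refine ⟨|C₁| * |C₂|, fun z => ?_⟩
    rw [norm_mul]
    exact mul_le_mul ((h₁ z).trans (le_abs_self C₁)) ((h₂ z).trans (le_abs_self C₂))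
      (norm_nonneg _) (abs_nonneg _)

lemma InQ.sum {ι : Type*} (s : Finset ι) (g : ι → EE d → ℂ) (h : ∀ i ∈ s, InQ (g i)) :
    InQ fun z => ∑ i ∈ s, g i z := by
  classical
  induction s using Finset.induction_on with
  | empty => simpa using InQ.const 0
  | insert _ _ hni ih =>
    rename_i a s'
    have : (fun z => ∑ i ∈ insert a s', g i z) = fun z => g a z + ∑ i ∈ s', g i z := by
      funext z; rw [Finset.sum_insert hni]
    rw [this]
    exact (h a (Finset.mem_insert_self a s')).add
      (ih fun i hi => h i (Finset.mem_insert_of_mem hi))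

lemma InQ.sub {a b : EE d → ℂ} (ha : InQ a) (hb : InQ b) : InQ fun z => a z - b z := by
  have h := ha.add ((InQ.const (-1)).mul hb)
  have he : (fun z => a z - b z) = fun z => a z + (-1 : ℂ) * b z := by funext z; ring
  rw [he]; exact h

lemma InQ.negC {a : EE d → ℂ} (ha : InQ a) : InQ fun z => -(a z) := by
  have h := (InQ.const (-1)).mul ha
  have he : (fun z => -(a z)) = fun z => (-1 : ℂ) * a z := by funext z; ring
  rw [he]; exact h

lemma InQ_rv (v : EE d) : InQ (rv v) := by
  have he : rv v = fun z =>
      (∑ i, (2 * v.1 i : ℂ) * (((z.1 i : ℝ) : ℂ) * (((wt z : ℝ)) : ℂ)⁻¹))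
        + ∑ i, (2 * v.2 i : ℂ) * (((z.2 i : ℝ) : ℂ) * (((wt z : ℝ)) : ℂ)⁻¹) := by
    funext z
    rw [rv, fderiv_wt, gradWt_apply]
    push_cast
    rw [add_mul, Finset.sum_mul, Finset.sum_mul]
    congr 1 <;> exact Finset.sum_congr rfl fun i _ => by ring
  rw [he]
  exact (InQ.sum _ _ fun i _ => (InQ.const _).mul (InQ.xdiv i)).add
    (InQ.sum _ _ fun i _ => (InQ.const _).mul (InQ.wdiv i))

lemma InQ.pdc {g : EE d → ℂ} (hg : InQ g) (v : EE d) : InQ (_root_.pd v g) := by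
  induction hg with
  | const c =>
    have : pd v (fun _ : EE d => c) = fun _ => (0 : ℂ) := funext fun z => pd_const c v z
    rw [this]; exact InQ.const 0
  | invwt =>
    have he : (fun z : EE d => (((wt z : ℝ)) : ℂ)⁻¹)
        = fun y => (((wt y : ℝ) : ℂ) ^ (0+1))⁻¹ := by
      funext y; rw [zero_add, pow_one]
    have hval : pd v (fun z : EE d => (((wt z : ℝ)) : ℂ)⁻¹)
        = fun z => (-1 : ℂ) * (rv v z * (((wt z : ℝ)) : ℂ)⁻¹) := by
      funext z
      rw [he, pd_inv_wtpow 0 v z]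
      push_cast
      rw [pow_one]
      ring
    rw [hval]
    exact (InQ.const (-1)).mul ((InQ_rv v).mul InQ.invwt)
  | xdiv i =>
    have hcd : Differentiable ℝ (fun z : EE d => ((z.1 i : ℝ) : ℂ)) :=
      (Complex.ofRealCLM.comp (coordx i)).differentiable
    have hinvd : Differentiable ℝ (fun z : EE d => (((wt z : ℝ)) : ℂ)⁻¹) :=
      (contDiff_wtC.inv wtC_ne_zero).differentiable (by simp)
    have hinv_pd : ∀ z, pd v (fun y : EE d => (((wt y : ℝ)) : ℂ)⁻¹) z
        = (-1 : ℂ) * (rv v z * (((wt z : ℝ)) : ℂ)⁻¹) := by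
      intro z
      have he : (fun y : EE d => (((wt y : ℝ)) : ℂ)⁻¹)
          = fun y => (((wt y : ℝ) : ℂ) ^ (0+1))⁻¹ := by
        funext y; rw [zero_add, pow_one]
      rw [he, pd_inv_wtpow 0 v z]
      push_cast
      rw [pow_one]
      ring
    have hc_pd : ∀ z, pd v (fun y : EE d => ((y.1 i : ℝ) : ℂ)) z = ((v.1 i : ℝ) : ℂ) := by
      intro z
      have : HasFDerivAt (fun y : EE d => ((y.1 i : ℝ) : ℂ))
          (Complex.ofRealCLM.comp (coordx i)) z :=
        (Complex.ofRealCLM.comp (coordx i)).hasFDerivAt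
      rw [pd, this.fderiv]; rfl
    have hval : pd v (fun z => ((z.1 i : ℝ) : ℂ) * (((wt z : ℝ)) : ℂ)⁻¹)
        = fun z => ((v.1 i : ℝ) : ℂ) * (((wt z : ℝ)) : ℂ)⁻¹
            + (-1 : ℂ) * (rv v z * (((z.1 i : ℝ) : ℂ) * (((wt z : ℝ)) : ℂ)⁻¹)) := by
      funext z
      rw [pd_mul (hcd z) (hinvd z), hc_pd z, hinv_pd z]
      ring
    rw [hval]
    exact ((InQ.const _).mul InQ.invwt).add ((InQ.const (-1)).mul ((InQ_rv v).mul (InQ.xdiv i)))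
  | wdiv i =>
    have hcd : Differentiable ℝ (fun z : EE d => ((z.2 i : ℝ) : ℂ)) :=
      (Complex.ofRealCLM.comp (coordw i)).differentiable
    have hinvd : Differentiable ℝ (fun z : EE d => (((wt z : ℝ)) : ℂ)⁻¹) :=
      (contDiff_wtC.inv wtC_ne_zero).differentiable (by simp)
    have hinv_pd : ∀ z, pd v (fun y : EE d => (((wt y : ℝ)) : ℂ)⁻¹) z
        = (-1 : ℂ) * (rv v z * (((wt z : ℝ)) : ℂ)⁻¹) := by
      intro z
      have he : (fun y : EE d => (((wt y : ℝ)) : ℂ)⁻¹)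
          = fun y => (((wt y : ℝ) : ℂ) ^ (0+1))⁻¹ := by
        funext y; rw [zero_add, pow_one]
      rw [he, pd_inv_wtpow 0 v z]
      push_cast
      rw [pow_one]
      ring
    have hc_pd : ∀ z, pd v (fun y : EE d => ((y.2 i : ℝ) : ℂ)) z = ((v.2 i : ℝ) : ℂ) := by
      intro z
      have : HasFDerivAt (fun y : EE d => ((y.2 i : ℝ) : ℂ))
          (Complex.ofRealCLM.comp (coordw i)) z :=
        (Complex.ofRealCLM.comp (coordw i)).hasFDerivAt
      rw [pd, this.fderiv]; rfl
    have hval : pd v (fun z => ((z.2 i : ℝ) : ℂ) * (((wt z : ℝ)) : ℂ)⁻¹)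
        = fun z => ((v.2 i : ℝ) : ℂ) * (((wt z : ℝ)) : ℂ)⁻¹
            + (-1 : ℂ) * (rv v z * (((z.2 i : ℝ) : ℂ) * (((wt z : ℝ)) : ℂ)⁻¹)) := by
      funext z
      rw [pd_mul (hcd z) (hinvd z), hc_pd z, hinv_pd z]
      ring
    rw [hval]
    exact ((InQ.const _).mul InQ.invwt).add ((InQ.const (-1)).mul ((InQ_rv v).mul (InQ.wdiv i)))
  | add ha hb iha ihb =>
    rename_i a b
    have hval : pd v (fun z => a z + b z) = fun z => pd v a z + pd v b z := by
      funext z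
      exact pd_add ((ha.contDiff.differentiable (by simp)) z)
        ((hb.contDiff.differentiable (by simp)) z) v
    rw [hval]
    exact iha.add ihb
  | mul ha hb iha ihb =>
    rename_i a b
    have hval : pd v (fun z => a z * b z) = fun z => pd v a z * b z + a z * pd v b z := by
      funext z
      exact pd_mul ((ha.contDiff.differentiable (by simp)) z)
        ((hb.contDiff.differentiable (by simp)) z) v
    rw [hval]
    exact (iha.mul hb).add (ha.mul ihb)

/-! ### Bounds on all iterated derivatives of `InQ` functions -/

noncomputable def cK (s : Fin d ⊕ Fin d) : EE d →L[ℝ] ℂ :=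
  Sum.elim (fun i => (coordx i).smulRight (1 : ℂ)) (fun i => (coordw i).smulRight (1 : ℂ)) s

lemma ee_decomp (v : EE d) :
    v = (∑ i, v.1 i • evx i) + ∑ i, v.2 i • evw i := by
  have h1 : (∑ i, v.1 i • evx (d := d) i) = (v.1, 0) := by
    rw [Prod.ext_iff]
    constructor
    · rw [Prod.fst_sum]
      funext j
      simp only [evx, Prod.smul_mk, Finset.sum_apply, Pi.smul_apply, Pi.single_apply,
        smul_eq_mul, mul_ite, mul_one, mul_zero]
      simp
    · rw [Prod.snd_sum]
      simp [evx]
  have h2 : (∑ i, v.2 i • evw (d := d) i) = (0, v.2) := by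
    rw [Prod.ext_iff]
    constructor
    · rw [Prod.fst_sum]
      simp [evw]
    · rw [Prod.snd_sum]
      funext j
      simp only [evw, Prod.smul_mk, Finset.sum_apply, Pi.smul_apply, Pi.single_apply,
        smul_eq_mul, mul_ite, mul_one, mul_zero]
      simp
  rw [h1, h2]
  ext <;> simp

lemma clm_decomp (L : EE d →L[ℝ] ℂ) :
    L = ∑ s : Fin d ⊕ Fin d, L (ev s) • cK s := by
  refine ContinuousLinearMap.ext fun v => ?_
  rw [ContinuousLinearMap.sum_apply]
  conv_lhs => rw [ee_decomp v]
  rw [map_add, map_sum, map_sum]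
  rw [Fintype.sum_sum_type]
  congr 1
  · refine Finset.sum_congr rfl fun i _ => ?_
    rw [L.map_smul, ContinuousLinearMap.smul_apply]
    simp [cK, ev, Complex.real_smul, smul_eq_mul]
    ring
  · refine Finset.sum_congr rfl fun i _ => ?_
    rw [L.map_smul, ContinuousLinearMap.smul_apply]
    simp [cK, ev, Complex.real_smul, smul_eq_mul]
    ring

lemma InQ.iterBound : ∀ (n : ℕ) {g : EE d → ℂ}, InQ g →
    ∃ C : ℝ, ∀ z, ‖iteratedFDeriv ℝ n g z‖ ≤ C := by
  intro n
  induction n with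
  | zero =>
    intro g hg
    obtain ⟨C, hC⟩ := hg.bounded
    exact ⟨C, fun z => by rw [norm_iteratedFDeriv_zero]; exact hC z⟩
  | succ n ih =>
    intro g hg
    choose C hC using fun s : Fin d ⊕ Fin d => ih (hg.pdc (ev s))
    refine ⟨∑ s : Fin d ⊕ Fin d, ‖cK (d := d) s‖ * C s, fun z => ?_⟩
    rw [← norm_iteratedFDeriv_fderiv]
    have hdecomp : fderiv ℝ g
        = fun z => ∑ s : Fin d ⊕ Fin d, _root_.pd (ev s) g z • cK s :=
      funext fun z => clm_decomp (fderiv ℝ g z)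
    rw [hdecomp]
    have hsm : ∀ s : Fin d ⊕ Fin d,
        ContDiff ℝ (n : ℕ∞) (fun z => _root_.pd (ev s) g z • cK s) := by
      intro s
      have h1 : ContDiff ℝ (⊤ : ℕ∞) (_root_.pd (ev s) g) := (hg.pdc (ev s)).contDiff
      have h2 : (fun z => _root_.pd (ev s) g z • cK s)
          = ((ContinuousLinearMap.toSpanSingleton ℂ (cK (d := d) s)).restrictScalars ℝ)
            ∘ (_root_.pd (ev s) g) := by
        funext z
        simp [ContinuousLinearMap.toSpanSingleton_apply]
      rw [h2]
      exact (((ContinuousLinearMap.toSpanSingleton ℂ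
        (cK (d := d) s)).restrictScalars ℝ).contDiff).comp (h1.of_le (by exact_mod_cast le_top))
    have hsum_eq : iteratedFDeriv ℝ n
        (fun z => ∑ s : Fin d ⊕ Fin d, _root_.pd (ev s) g z • cK s)
        = ∑ s : Fin d ⊕ Fin d, iteratedFDeriv ℝ n (fun z => _root_.pd (ev s) g z • cK s) :=
      iteratedFDeriv_sum fun s _ => hsm s
    rw [hsum_eq, Finset.sum_apply]
    refine (norm_sum_le _ _).trans ?_
    refine Finset.sum_le_sum fun s _ => ?_
    have h2 : (fun z => _root_.pd (ev s) g z • cK s)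
        = ((ContinuousLinearMap.toSpanSingleton ℂ (cK (d := d) s)).restrictScalars ℝ)
          ∘ (_root_.pd (ev s) g) := by
      funext z
      simp [ContinuousLinearMap.toSpanSingleton_apply]
    rw [h2, ContinuousLinearMap.iteratedFDeriv_comp_left _
      ((((hg.pdc (ev s)).contDiff).of_le ((by exact_mod_cast le_top))).contDiffAt (x := z)) le_rfl]
    refine (ContinuousLinearMap.norm_compContinuousMultilinearMap_le _ _).trans ?_
    have hnorm : ‖(ContinuousLinearMap.toSpanSingleton ℂ
        (cK (d := d) s)).restrictScalars ℝ‖ = ‖cK (d := d) s‖ := by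
      rw [ContinuousLinearMap.norm_restrictScalars, ContinuousLinearMap.norm_toSpanSingleton]
    rw [hnorm]
    exact mul_le_mul_of_nonneg_left (hC s z) (norm_nonneg _)

lemma InQ.isBSpace {g : EE d → ℂ} (hg : InQ g) : IsBSpace g :=
  ⟨hg.contDiff, fun N => InQ.iterBound N hg⟩

/-! ### Multi-index bookkeeping -/

lemma mem_MIdx {k : ℕ} {α : Idx d} :
    α ∈ MIdx d k ↔ (∑ i, α.1 i) + (∑ i, α.2 i) ≤ 2 * k := by
  constructor
  · intro h; exact (Finset.mem_filter.mp h).2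
  · intro h
    refine Finset.mem_filter.mpr ⟨Finset.mem_image.mpr ?_, h⟩
    have hx : ∀ i, α.1 i < 2 * k + 1 := by
      intro i
      have h1 : α.1 i ≤ ∑ j, α.1 j :=
        Finset.single_le_sum (fun j _ => Nat.zero_le _) (Finset.mem_univ i)
      omega
    have hw : ∀ i, α.2 i < 2 * k + 1 := by
      intro i
      have h1 : α.2 i ≤ ∑ j, α.2 j :=
        Finset.single_le_sum (fun j _ => Nat.zero_le _) (Finset.mem_univ i)
      omega
    refine ⟨(fun i => ⟨α.1 i, hx i⟩, fun i => ⟨α.2 i, hw i⟩), Finset.mem_univ _, ?_⟩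
    exact Prod.ext (funext fun i => rfl) (funext fun i => rfl)

lemma sum_shiftIdx (s : Fin d ⊕ Fin d) :
    (∑ i, (shiftIdx s).1 i) + (∑ i, (shiftIdx s).2 i) = 1 := by
  cases s with
  | inl j => simp [shiftIdx, Pi.single_apply]
  | inr j => simp [shiftIdx, Pi.single_apply]

lemma sum_idx_add (α β : Idx d) :
    (∑ i, (α + β).1 i) + (∑ i, (α + β).2 i)
      = ((∑ i, α.1 i) + (∑ i, α.2 i)) + ((∑ i, β.1 i) + (∑ i, β.2 i)) := by
  simp only [Prod.fst_add, Prod.snd_add, Pi.add_apply, Finset.sum_add_distrib]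
  ring

lemma mem_MIdx_mono {k : ℕ} {α : Idx d} (h : α ∈ MIdx d k) : α ∈ MIdx d (k+1) := by
  rw [mem_MIdx] at h ⊢; omega

lemma mem_MIdx_shift {k : ℕ} {α : Idx d} (h : α ∈ MIdx d k) (s : Fin d ⊕ Fin d) :
    α + shiftIdx s ∈ MIdx d (k+1) := by
  rw [mem_MIdx] at h ⊢
  rw [sum_idx_add, sum_shiftIdx]
  omega

lemma mem_MIdx_shift2 {k : ℕ} {α : Idx d} (h : α ∈ MIdx d k) (s : Fin d ⊕ Fin d) :
    α + shiftIdx s + shiftIdx s ∈ MIdx d (k+1) := by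
  rw [mem_MIdx] at h ⊢
  rw [sum_idx_add, sum_idx_add, sum_shiftIdx]
  omega

lemma sum_ite_collapse {K : ℕ} {γ : Idx d} (hγ : γ ∈ MIdx d K) (c : ℂ) (Q : Idx d → ℂ) :
    (∑ β ∈ MIdx d K, (if β = γ then c else 0) * Q β) = c * Q γ := by
  classical
  have : ∀ β ∈ MIdx d K, (if β = γ then c else 0) * Q β
      = if β = γ then c * Q β else 0 := by
    intro β _; split <;> simp
  rw [Finset.sum_congr rfl this, Finset.sum_ite_eq' (MIdx d K) γ (fun β => c * Q β), if_pos hγ]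

/-! ### The first-order coefficient operator -/

noncomputable def P1 (m : ℂ) (b : EE d → ℂ) (v : EE d) : EE d → ℂ :=
  fun z => pd v b z - m * rv v z * b z

lemma InQ.P1 {b : EE d → ℂ} (hb : InQ b) (m : ℂ) (v : EE d) : InQ (_root_.P1 m b v) :=
  (hb.pdc v).sub (((InQ.const m).mul (InQ_rv v)).mul hb)

lemma key_dir2 (n : ℕ) (v : EE d) {p q : EE d → ℂ}
    (hp : ContDiff ℝ (⊤ : ℕ∞) p) (hq : ContDiff ℝ (⊤ : ℕ∞) q) (z : EE d) :
    pd v (pd v (fun y => (((wt y : ℝ) : ℂ) ^ (n+1))⁻¹ * (p y * q y))) z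
      = ((((wt z : ℝ) : ℂ)) ^ (n+1))⁻¹ *
        (P1 ((n:ℂ)+1) (P1 ((n:ℂ)+1) p v) v z * q z
          + 2 * P1 ((n:ℂ)+1) p v z * pd v q z
          + p z * pd v (pd v q) z) := by
  have hrv : ContDiff ℝ (⊤ : ℕ∞) (rv v) := contDiff_rv v
  have hpq : ContDiff ℝ (⊤ : ℕ∞) fun y => p y * q y := hp.mul hq
  have hdp : ∀ y, DifferentiableAt ℝ p y := fun y => hp.differentiable (by simp) y
  have hdq : ∀ y, DifferentiableAt ℝ q y := fun y => hq.differentiable (by simp) y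
  have hdrv : ∀ y, DifferentiableAt ℝ (rv v) y := fun y => hrv.differentiable (by simp) y
  have hdpq : ∀ y, DifferentiableAt ℝ (fun y' => p y' * q y') y :=
    fun y => hpq.differentiable (by simp) y
  have hdpdp : ∀ y, DifferentiableAt ℝ (pd v p) y :=
    fun y => (pd_contDiff hp v).differentiable (by simp) y
  have hdpdq : ∀ y, DifferentiableAt ℝ (pd v q) y :=
    fun y => (pd_contDiff hq v).differentiable (by simp) y
  have step1 : pd v (fun y => (((wt y : ℝ) : ℂ) ^ (n+1))⁻¹ * (p y * q y))
      = fun y => (((wt y : ℝ) : ℂ) ^ (n+1))⁻¹ *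
          (pd v (fun y' => p y' * q y') y - ((n:ℂ)+1) * rv v y * (p y * q y)) := by
    funext y
    rw [pd_invpow_mul n v (hdpq y)]
  rw [step1]
  have hS : ContDiff ℝ (⊤ : ℕ∞) (fun y =>
      pd v (fun y' => p y' * q y') y - ((n:ℂ)+1) * rv v y * (p y * q y)) :=
    (pd_contDiff hpq v).sub ((contDiff_const.mul hrv).mul hpq)
  rw [pd_invpow_mul n v (hS.differentiable (by simp) z)]
  congr 1
  -- expand everything and finish by ring
  have hpd_pq : pd v (fun y' => p y' * q y')
      = fun y => pd v p y * q y + p y * pd v q y := by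
    funext y; exact pd_mul (hdp y) (hdq y) v
  have e1 : pd v (fun y =>
      pd v (fun y' => p y' * q y') y - ((n:ℂ)+1) * rv v y * (p y * q y)) z
      = pd v (pd v (fun y' => p y' * q y')) z
        - (((n:ℂ)+1) * pd v (rv v) z * (p z * q z)
            + ((n:ℂ)+1) * rv v z * pd v (fun y' => p y' * q y') z) := by
    rw [pd_sub ((pd_contDiff hpq v).differentiable (by simp) z)
      (((contDiff_const.mul hrv).mul hpq).differentiable (by simp) z) v]
    congr 1
    rw [pd_mul ((contDiff_const.mul hrv).differentiable (by simp) z) (hdpq z) v,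
      pd_const_mul (hdrv z) (((n:ℂ)+1)) v]
  have e2 : pd v (pd v (fun y' => p y' * q y')) z
      = (pd v (pd v p) z * q z + pd v p z * pd v q z)
        + (pd v p z * pd v q z + p z * pd v (pd v q) z) := by
    rw [hpd_pq]
    rw [pd_add (((pd_contDiff hp v).mul hq).differentiable (by simp) z)
      ((hp.mul (pd_contDiff hq v)).differentiable (by simp) z) v,
      pd_mul (hdpdp z) (hdq z) v, pd_mul (hdp z) (hdpdq z) v]
  rw [e1, e2]
  have e3 : pd v (fun y' => p y' * q y') z = pd v p z * q z + p z * pd v q z :=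
    pd_mul (hdp z) (hdq z) v
  rw [e3]
  have hP1e : P1 ((n:ℂ)+1) p v = fun y => pd v p y - ((n:ℂ)+1) * rv v y * p y := rfl
  rw [hP1e]
  simp only [P1]
  have e4 : pd v (fun y => pd v p y - ((n:ℂ)+1) * rv v y * p y) z
      = pd v (pd v p) z - (((n:ℂ)+1) * pd v (rv v) z * p z
          + ((n:ℂ)+1) * rv v z * pd v p z) := by
    rw [pd_sub (hdpdp z) (((contDiff_const.mul hrv).mul hp).differentiable (by simp) z) v]
    congr 1
    rw [pd_mul ((contDiff_const.mul hrv).differentiable (by simp) z) (hdp z) v,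
      pd_const_mul (hdrv z) (((n:ℂ)+1)) v]
  rw [e4]
  ring

/-! ### Main induction -/

lemma InQ.iteC {c : Prop} [Decidable c] {a : EE d → ℂ} (ha : InQ a) :
    InQ (fun z => if c then a z else 0) := by
  by_cases hc : c
  · simp only [if_pos hc]; exact ha
  · simp only [if_neg hc]; exact InQ.const 0

lemma aux_main (d k : ℕ) :
    ∃ b : Idx d → EE d → ℂ, (∀ α, InQ (b α)) ∧
      ∀ f : EE d → ℂ, ContDiff ℝ (⊤ : ℕ∞) f → ∀ z,
        (Oop^[k] f) z
          = ((((wt z : ℝ) : ℂ)) ^ k)⁻¹ * ∑ α ∈ MIdx d k, b α z * pdMulti α f z := by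
  classical
  induction k with
  | zero =>
    refine ⟨fun α => if α = 0 then (fun _ => 1) else (fun _ => 0), ?_, ?_⟩
    · intro α
      by_cases h : α = 0
      · simpa [h] using InQ.const (d := d) 1
      · simpa [h] using InQ.const (d := d) 0
    · intro f hf z
      have hM0 : MIdx d 0 = {(0 : Idx d)} := by
        apply Finset.ext
        intro α
        rw [mem_MIdx, Finset.mem_singleton]
        constructor
        · intro h
          have h1 : (∑ i, α.1 i) = 0 := by omega
          have h2 : (∑ i, α.2 i) = 0 := by omega
          rw [Finset.sum_eq_zero_iff] at h1 h2
          refine Prod.ext (funext fun i => ?_) (funext fun i => ?_)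
          · exact h1 i (Finset.mem_univ i)
          · exact h2 i (Finset.mem_univ i)
        · rintro rfl; simp
      rw [Function.iterate_zero_apply, hM0, Finset.sum_singleton, pdMulti_zero]
      simp
  | succ k ih =>
    obtain ⟨b, hbQ, hb⟩ := ih
    refine ⟨fun β z => ∑ α ∈ MIdx d k,
      ((if β = α then b α z
          - ∑ s : Fin d ⊕ Fin d, P1 ((k:ℂ)+1) (P1 ((k:ℂ)+1) (b α) (ev s)) (ev s) z else 0)
        + ∑ s : Fin d ⊕ Fin d,
          ((if β = α + shiftIdx s then -(2 * P1 ((k:ℂ)+1) (b α) (ev s) z) else 0)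
            + (if β = α + shiftIdx s + shiftIdx s then -(b α z) else 0))), ?_, ?_⟩
    · -- membership in the algebra
      intro β
      refine InQ.sum _ _ fun α _ => ?_
      refine InQ.add ?_ (InQ.sum _ _ fun s _ => InQ.add ?_ ?_)
      · exact InQ.iteC ((hbQ α).sub (InQ.sum _ _ fun s _ =>
          (((hbQ α).P1 ((k:ℂ)+1) (ev s)).P1 ((k:ℂ)+1) (ev s))))
      · exact InQ.iteC ((InQ.const 2).mul ((hbQ α).P1 ((k:ℂ)+1) (ev s))).negC
      · exact InQ.iteC (hbQ α).negC
    · -- the formula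
      intro f hf z
      have hG : Oop^[k] f = fun y =>
          ((((wt y : ℝ) : ℂ)) ^ k)⁻¹ * ∑ α ∈ MIdx d k, b α y * pdMulti α f y :=
        funext fun y => hb f hf y
      rw [Function.iterate_succ_apply', hG]
      have hT : ∀ α : Idx d, ContDiff ℝ (⊤ : ℕ∞)
          (fun y => ((((wt y : ℝ) : ℂ)) ^ (k+1))⁻¹ * (b α y * pdMulti α f y)) :=
        fun α => (contDiff_invwtpow (k+1)).mul ((hbQ α).contDiff.mul (pdMulti_contDiff hf α))
      set H : EE d → ℂ := fun y =>
        ∑ α ∈ MIdx d k, ((((wt y : ℝ) : ℂ)) ^ (k+1))⁻¹ * (b α y * pdMulti α f y) with hH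
      have hHdiv : (fun y => (((((wt y : ℝ) : ℂ)) ^ k)⁻¹
          * ∑ α ∈ MIdx d k, b α y * pdMulti α f y) / ((wt y : ℝ) : ℂ)) = H := by
        funext y
        rw [hH, div_eq_mul_inv, mul_right_comm]
        have hpow : ((((wt y : ℝ) : ℂ)) ^ k)⁻¹ * (((wt y : ℝ) : ℂ))⁻¹
            = ((((wt y : ℝ) : ℂ)) ^ (k+1))⁻¹ := by
          rw [pow_succ, mul_inv]
        rw [hpow, Finset.mul_sum]
      have hOop : Oop (fun y =>
          ((((wt y : ℝ) : ℂ)) ^ k)⁻¹ * ∑ α ∈ MIdx d k, b α y * pdMulti α f y) z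
          = H z - lap H z := by
        simp only [Oop]
        rw [hHdiv]
        congr 1
        simpa using congrFun hHdiv z
      rw [hOop]
      -- compute the Laplacian term
      have hlap : lap H z = ∑ s : Fin d ⊕ Fin d, ∑ α ∈ MIdx d k,
          ((((wt z : ℝ) : ℂ)) ^ (k+1))⁻¹ *
            (P1 ((k:ℂ)+1) (P1 ((k:ℂ)+1) (b α) (ev s)) (ev s) z * pdMulti α f z
              + 2 * P1 ((k:ℂ)+1) (b α) (ev s) z * pdMulti (α + shiftIdx s) f z
              + b α z * pdMulti (α + shiftIdx s + shiftIdx s) f z) := by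
        rw [lap_eq_sum]
        refine Finset.sum_congr rfl fun s _ => ?_
        have h1 : pd (ev s) H = fun y => ∑ α ∈ MIdx d k,
            pd (ev s) (fun y' => ((((wt y' : ℝ) : ℂ)) ^ (k+1))⁻¹
              * (b α y' * pdMulti α f y')) y := by
          funext y
          rw [hH]
          exact pd_sum (fun α _ => (hT α).differentiable (by simp) y) (ev s)
        rw [h1]
        have h2 : pd (ev s) (fun y => ∑ α ∈ MIdx d k,
            pd (ev s) (fun y' => ((((wt y' : ℝ) : ℂ)) ^ (k+1))⁻¹
              * (b α y' * pdMulti α f y')) y) z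
            = ∑ α ∈ MIdx d k, pd (ev s) (pd (ev s)
              (fun y' => ((((wt y' : ℝ) : ℂ)) ^ (k+1))⁻¹
                * (b α y' * pdMulti α f y'))) z :=
          pd_sum (fun α _ => (pd_contDiff (hT α) (ev s)).differentiable (by simp) z) (ev s)
        rw [h2]
        refine Finset.sum_congr rfl fun α hα => ?_
        have hkey := key_dir2 k (ev s) ((hbQ α).contDiff) (pdMulti_contDiff hf α) z
        rw [hkey, pdMulti_shift hf α s]
        have e1 : pd (ev s) (pdMulti (α + shiftIdx s) f) z
            = pdMulti (α + shiftIdx s + shiftIdx s) f z :=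
          congrFun (pdMulti_shift hf (α + shiftIdx s) s) z
        rw [e1]
      rw [hlap]
      -- collapse the new-coefficient sum
      have hcol : (∑ β ∈ MIdx d (k+1), (∑ α ∈ MIdx d k,
          ((if β = α then b α z
              - ∑ s : Fin d ⊕ Fin d, P1 ((k:ℂ)+1) (P1 ((k:ℂ)+1) (b α) (ev s)) (ev s) z else 0)
            + ∑ s : Fin d ⊕ Fin d,
              ((if β = α + shiftIdx s then -(2 * P1 ((k:ℂ)+1) (b α) (ev s) z) else 0)
                + (if β = α + shiftIdx s + shiftIdx s then -(b α z) else 0))))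
            * pdMulti β f z)
          = ∑ α ∈ MIdx d k,
            ((b α z - ∑ s : Fin d ⊕ Fin d,
                P1 ((k:ℂ)+1) (P1 ((k:ℂ)+1) (b α) (ev s)) (ev s) z) * pdMulti α f z
              + ∑ s : Fin d ⊕ Fin d,
                (-(2 * P1 ((k:ℂ)+1) (b α) (ev s) z) * pdMulti (α + shiftIdx s) f z
                  + -(b α z) * pdMulti (α + shiftIdx s + shiftIdx s) f z)) := by
        have hexp : ∀ β ∈ MIdx d (k+1), (∑ α ∈ MIdx d k,
            ((if β = α then b α z
                - ∑ s : Fin d ⊕ Fin d, P1 ((k:ℂ)+1) (P1 ((k:ℂ)+1) (b α) (ev s)) (ev s) z else 0)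
              + ∑ s : Fin d ⊕ Fin d,
                ((if β = α + shiftIdx s then -(2 * P1 ((k:ℂ)+1) (b α) (ev s) z) else 0)
                  + (if β = α + shiftIdx s + shiftIdx s then -(b α z) else 0))))
              * pdMulti β f z
            = ∑ α ∈ MIdx d k,
              ((if β = α then b α z
                  - ∑ s : Fin d ⊕ Fin d, P1 ((k:ℂ)+1) (P1 ((k:ℂ)+1) (b α) (ev s)) (ev s) z
                else 0) * pdMulti β f z
                + ∑ s : Fin d ⊕ Fin d,
                  ((if β = α + shiftIdx s then -(2 * P1 ((k:ℂ)+1) (b α) (ev s) z) else 0)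
                      * pdMulti β f z
                    + (if β = α + shiftIdx s + shiftIdx s then -(b α z) else 0)
                      * pdMulti β f z)) := by
          intro β _
          rw [Finset.sum_mul]
          refine Finset.sum_congr rfl fun α _ => ?_
          rw [add_mul, Finset.sum_mul]
          congr 1
          exact Finset.sum_congr rfl fun s _ => add_mul _ _ _
        rw [Finset.sum_congr rfl hexp, Finset.sum_comm]
        refine Finset.sum_congr rfl fun α hα => ?_
        rw [Finset.sum_add_distrib]
        congr 1
        · exact sum_ite_collapse (mem_MIdx_mono hα) _ _
        · rw [Finset.sum_comm]
          refine Finset.sum_congr rfl fun s _ => ?_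
          rw [Finset.sum_add_distrib]
          congr 1
          · exact sum_ite_collapse (mem_MIdx_shift hα s) _ _
          · exact sum_ite_collapse (mem_MIdx_shift2 hα s) _ _
      rw [hcol]
      -- final algebraic rearrangement
      rw [Finset.sum_comm (s := (Finset.univ : Finset (Fin d ⊕ Fin d))) (t := MIdx d k)]
      rw [hH]
      beta_reduce
      rw [Finset.mul_sum, ← Finset.sum_sub_distrib]
      refine Finset.sum_congr rfl fun α hα => ?_
      have hu : ∀ X : (Fin d ⊕ Fin d) → ℂ,
          (∑ s : Fin d ⊕ Fin d, ((((wt z : ℝ) : ℂ)) ^ (k+1))⁻¹ * X s)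
            = ((((wt z : ℝ) : ℂ)) ^ (k+1))⁻¹ * ∑ s : Fin d ⊕ Fin d, X s :=
        fun X => (Finset.mul_sum _ _ _).symm
      rw [hu]
      have hsplit : (∑ s : Fin d ⊕ Fin d,
          (P1 ((k:ℂ)+1) (P1 ((k:ℂ)+1) (b α) (ev s)) (ev s) z * pdMulti α f z
            + 2 * P1 ((k:ℂ)+1) (b α) (ev s) z * pdMulti (α + shiftIdx s) f z
            + b α z * pdMulti (α + shiftIdx s + shiftIdx s) f z))
          = (∑ s : Fin d ⊕ Fin d, P1 ((k:ℂ)+1) (P1 ((k:ℂ)+1) (b α) (ev s)) (ev s) z)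
              * pdMulti α f z
            - ∑ s : Fin d ⊕ Fin d,
              (-(2 * P1 ((k:ℂ)+1) (b α) (ev s) z) * pdMulti (α + shiftIdx s) f z
                + -(b α z) * pdMulti (α + shiftIdx s + shiftIdx s) f z) := by
        rw [Finset.sum_mul, ← Finset.sum_sub_distrib]
        exact Finset.sum_congr rfl fun s _ => by ring
      rw [hsplit]
      ring

theorem Oop_iterate_eq_sum (d k : ℕ) :
    ∃ b : ((Fin d → ℕ) × (Fin d → ℕ)) → ((Fin d → ℝ) × (Fin d → ℝ)) → ℂ,
      (∀ α ∈ MIdx d k, IsBSpace (b α)) ∧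
      ∀ f : (Fin d → ℝ) × (Fin d → ℝ) → ℂ, ContDiff ℝ (⊤ : ℕ∞) f →
        ∀ z, (Oop^[k] f) z = ((wt z : ℂ)) ^ (-(k : ℤ)) * ∑ α ∈ MIdx d k, b α z * pdMulti α f z := by
  obtain ⟨b, hbQ, hb⟩ := aux_main d k
  refine ⟨b, fun α _ => (hbQ α).isBSpace, fun f hf z => ?_⟩
  rw [hb f hf z, zpow_neg, zpow_natCast]
end
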